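/- arXiv:2401.11183 — 2 statements merged into one kernel-verified Lean document; each statement's English description precedes it below -/
import Mathlib

section
/- (Proposition 1.) Let Y ⊆ ℝⁿ be a closed robustly positive invariant set for the difference inclusion z⁺ ∈ H(z,w) with disturbances in a compact set W ⊆ ℝ^{nw} containing 0, and suppose V : ℝⁿ → [0,∞) is a continuous ISS Lyapunov function on Y: there exist class-K∞ functions α₁, α₂, α₃ and a class-K function σ such that α₁(‖z‖) ≤ V(z) ≤ α₂(‖z‖) and sup over z⁺ ∈ H(z,w) of V(z⁺) is at most V(z) − α₃(‖z‖) + σ(‖w‖), for all z ∈ Y and w ∈ W. Then the origin is robustly asymptotically stable in Y: there exist β of class KL and γ of class K such that every solution ψ of the inclusion from any z ∈ Y under any disturbance sequence 𝐰 with values in W satisfies ‖ψ(k)‖ ≤ β(‖z‖, k) + γ(‖𝐰‖) for all k ∈ ℕ. -/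
open scoped Classical Pointwise
open Filter

noncomputable section

/-- `Vec n` is `ℝ^n` with the Euclidean norm. -/
abbrev Vec (n : ℕ) : Type := EuclideanSpace ℝ (Fin n)

/-- A function `σ : [0,∞) → [0,∞)` is of class K if it is continuous,
strictly increasing and `σ 0 = 0`. -/
def ClassK (σ : ℝ → ℝ) : Prop :=
  ContinuousOn σ (Set.Ici 0) ∧ StrictMonoOn σ (Set.Ici 0) ∧ σ 0 = 0

/-- Class K∞: class K and unbounded. -/
def ClassKInf (σ : ℝ → ℝ) : Prop :=
  ClassK σ ∧ Tendsto σ atTop atTop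

/-- Class KL function `β : [0,∞) × ℕ → [0,∞)`. -/
def ClassKL (β : ℝ → ℕ → ℝ) : Prop :=
  (∀ k, ClassK fun s => β s k) ∧
    ∀ s, 0 ≤ s → Antitone (fun k => β s k) ∧ Tendsto (fun k => β s k) atTop (nhds 0)

/-!
Along a trajectory, `v k = V (ψ k)` satisfies `v (k+1) ≤ v k - ρ (v k) + σ S` with
`ρ = α₃ ∘ α₂⁻¹` and `S = sup ‖wᵢ‖`. Once `v k ≤ c := ρ⁻¹ (2 σ S) + σ S` it stays below `c`; while
`v k > c` it drops by at least `ρ (v k) / 2`, which gives `2 v k + k ρ (v k) ≤ 2 v 0`, hence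
`min (v k) (ρ (v k)) ≤ 2 v 0 / (k + 1)`. Inverting the class-K∞ bounds yields
`β s k = α₁⁻¹ (μ⁻¹ (2 α₂ s / (k + 1)))` with `μ = min id ρ`, and `γ s = α₁⁻¹ (ρ⁻¹ (2 σ s) + σ s)`.
-/

open Set

namespace ClassK

variable {f g : ℝ → ℝ}

theorem nonneg (hf : ClassK f) {x : ℝ} (hx : 0 ≤ x) : 0 ≤ f x :=
  hf.2.2 ▸ hf.2.1.monotoneOn self_mem_Ici hx hx

theorem comp (hf : ClassK f) (hg : ClassK g) : ClassK fun x => f (g x) :=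
  ⟨hf.1.comp hg.1 fun _ hx => hg.nonneg hx,
    fun _ ha _ hb hab => hf.2.1 (hg.nonneg ha) (hg.nonneg hb) (hg.2.1 ha hb hab),
    by simp only [hg.2.2, hf.2.2]⟩

theorem add (hf : ClassK f) (hg : ClassK g) : ClassK fun x => f x + g x :=
  ⟨hf.1.add hg.1, fun _ ha _ hb hab => add_lt_add (hf.2.1 ha hb hab) (hg.2.1 ha hb hab),
    by simp only [hf.2.2, hg.2.2, add_zero]⟩

theorem min (hf : ClassK f) (hg : ClassK g) : ClassK fun x => min (f x) (g x) :=
  ⟨hf.1.inf hg.1, fun _ ha _ hb hab => min_lt_min (hf.2.1 ha hb hab) (hg.2.1 ha hb hab),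
    by simp only [hf.2.2, hg.2.2, min_self]⟩

theorem const_mul (hf : ClassK f) {c : ℝ} (hc : 0 < c) : ClassK fun x => c * f x :=
  ⟨continuousOn_const.mul hf.1, fun _ ha _ hb hab => mul_lt_mul_of_pos_left (hf.2.1 ha hb hab) hc,
    by simp only [hf.2.2, mul_zero]⟩

end ClassK

namespace ClassKInf

variable {f g : ℝ → ℝ}

theorem id : ClassKInf id :=
  ⟨⟨continuousOn_id, strictMonoOn_id, rfl⟩, tendsto_id⟩

theorem comp (hf : ClassKInf f) (hg : ClassKInf g) : ClassKInf fun x => f (g x) :=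
  ⟨hf.1.comp hg.1, hf.2.comp hg.2⟩

/-- `x ↦ f (max x 0) + min x 0` extends `f` to an order automorphism of `ℝ`, whose inverse
restricts to the inverse of `f` on `[0, ∞)`. -/
theorem exists_inverse (hf : ClassKInf f) :
    ∃ g, ClassKInf g ∧ ∀ x, 0 ≤ x → ∀ y, (g y ≤ x ↔ y ≤ f x) ∧ (x ≤ g y ↔ f x ≤ y) := by
  set F : ℝ → ℝ := fun x => f (max x 0) + min x 0
  have hF_eq : ∀ x, 0 ≤ x → F x = f x := fun x hx => by simp [F, hx]
  have hF_cont : Continuous F :=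
    (hf.1.1.comp_continuous (continuous_id.max continuous_const) fun x => le_max_right x 0).add
      (continuous_id.min continuous_const)
  have hF_mono : StrictMono F := by
    intro x y hxy
    have hmax : max x 0 ∈ Ici 0 := le_max_right x 0
    have hmax' : max y 0 ∈ Ici 0 := le_max_right y 0
    rcases le_or_gt y 0 with hy | hy
    · exact add_lt_add_of_le_of_lt (hf.1.2.1.monotoneOn hmax hmax' (max_le_max_right 0 hxy.le))
        (by simp [hy, hxy, hxy.le.trans hy])
    · exact add_lt_add_of_lt_of_le (hf.1.2.1 hmax hmax' (by simp [hxy, hy]))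
        (min_le_min_right 0 hxy.le)
  have hF_top : Tendsto F atTop atTop :=
    hf.2.congr' (eventually_ge_atTop 0 |>.mono fun x hx => (hF_eq x hx).symm)
  have hF_bot : Tendsto F atBot atBot :=
    tendsto_id.congr' (eventually_le_atBot 0 |>.mono fun x hx => by simp [F, hx, hf.1.2.2])
  set e := StrictMono.orderIsoOfSurjective F hF_mono (hF_cont.surjective hF_top hF_bot)
  have he : ∀ x, 0 ≤ x → e x = f x := fun x hx => hF_eq x hx
  have he0 : e.symm 0 = 0 := e.symm_apply_eq.2 (by rw [he 0 le_rfl, hf.1.2.2])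
  refine ⟨e.symm, ⟨⟨e.symm.continuous.continuousOn, e.symm.strictMono.strictMonoOn _, he0⟩,
    e.symm.tendsto_atTop⟩, fun x hx y => ?_⟩
  rw [e.symm_apply_le, e.le_symm_apply, he x hx]
  exact ⟨Iff.rfl, Iff.rfl⟩

theorem min (hf : ClassKInf f) (hg : ClassKInf g) : ClassKInf fun x => min (f x) (g x) :=
  ⟨hf.1.min hg.1, tendsto_inf_atTop _ hf.2 hg.2⟩

end ClassKInf

theorem classKL_div_succ {g h : ℝ → ℝ} (hg : ClassK g) (hh : ClassK h) :
    ClassKL fun s k => g (h s / (k + 1)) := by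
  refine ⟨fun k => hg.comp ?_, fun s hs => ⟨?_, ?_⟩⟩
  · simpa only [div_eq_inv_mul] using hh.const_mul (inv_pos.2 k.cast_add_one_pos)
  · have hhs := hh.nonneg hs
    intro k l hkl
    refine hg.2.1.monotoneOn (div_nonneg hhs (by positivity)) (div_nonneg hhs (by positivity)) ?_
    gcongr
  · have hlim : Tendsto (fun k : ℕ => h s / (k + 1)) atTop (nhdsWithin 0 (Ici 0)) := by
      refine tendsto_nhdsWithin_iff.2 ⟨?_, Eventually.of_forall fun k => ?_⟩
      · simpa only [mul_one_div, mul_zero] using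
          tendsto_one_div_add_atTop_nhds_zero_nat.const_mul (h s)
      · exact div_nonneg (hh.nonneg hs) (by positivity)
    have := (hg.1 0 self_mem_Ici).tendsto.comp hlim
    rwa [hg.2.2] at this

theorem le_or_two_mul_add_le_of_dissipation {v : ℕ → ℝ} {ρ : ℝ → ℝ} {s c : ℝ}
    (hρ : ClassK ρ) (hv : ∀ j, 0 ≤ v j) (hc : ∀ x, 0 ≤ x → ρ x < 2 * s → x + s ≤ c)
    (hstep : ∀ j, v (j + 1) ≤ v j - ρ (v j) + s) :
    ∀ k : ℕ, v k ≤ c ∨ 2 * v k + k * ρ (v k) ≤ 2 * v 0 := by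
  intro k
  induction k with
  | zero => simp
  | succ k ih =>
    have hρk := hρ.nonneg (hv k)
    by_cases hlow : ρ (v k) < 2 * s
    · exact Or.inl (by linarith [hstep k, hc _ (hv k) hlow])
    have hdesc : v (k + 1) ≤ v k - ρ (v k) / 2 := by linarith [hstep k]
    refine ih.imp (fun hk => by linarith) fun hk => ?_
    have hρ_succ : ρ (v (k + 1)) ≤ ρ (v k) := hρ.2.1.monotoneOn (hv _) (hv k) (by linarith)
    have hsum : ((k + 1 : ℕ) : ℝ) * ρ (v (k + 1)) ≤ (k + 1) * ρ (v k) := by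
      push_cast; gcongr
    linarith

theorem exists_classKL_bound_of_dissipation {α₁ α₂ α₃ σ : ℝ → ℝ} (h₁ : ClassKInf α₁)
    (h₂ : ClassKInf α₂) (h₃ : ClassKInf α₃) (hσ : ClassK σ) :
    ∃ β γ, ClassKL β ∧ ClassK γ ∧
      ∀ (r v : ℕ → ℝ) (s : ℝ), 0 ≤ s → (∀ j, 0 ≤ r j) →
        (∀ j, α₁ (r j) ≤ v j ∧ v j ≤ α₂ (r j)) → (∀ j, v (j + 1) ≤ v j - α₃ (r j) + σ s) →
          ∀ k, r k ≤ β (r 0) k + γ s := by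
  obtain ⟨κ₁, hκ₁, hκ₁_iff⟩ := h₁.exists_inverse
  obtain ⟨κ₂, hκ₂, hκ₂_iff⟩ := h₂.exists_inverse
  set ρ := fun x => α₃ (κ₂ x)
  have hρ : ClassKInf ρ := h₃.comp hκ₂
  obtain ⟨κρ, hκρ, hκρ_iff⟩ := hρ.exists_inverse
  obtain ⟨κμ, hκμ, hκμ_iff⟩ := (ClassKInf.id.min hρ).exists_inverse
  refine ⟨fun s k => κ₁ (κμ (2 * α₂ s / (k + 1))), fun s => κ₁ (κρ (2 * σ s) + σ s),
    classKL_div_succ (hκ₁.1.comp hκμ.1) (h₂.1.const_mul two_pos),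
    hκ₁.1.comp ((hκρ.1.comp (hσ.const_mul two_pos)).add hσ), ?_⟩
  intro r v s hs hr hrv hstep k
  have hv : ∀ j, 0 ≤ v j := fun j => (h₁.1.nonneg (hr j)).trans (hrv j).1
  have hρv : ∀ j, ρ (v j) ≤ α₃ (r j) := fun j =>
    h₃.1.2.1.monotoneOn (hκ₂.1.nonneg (hv j)) (hr j) ((hκ₂_iff _ (hr j) _).1.2 (hrv j).2)
  have hc : ∀ x, 0 ≤ x → ρ x < 2 * σ s → x + σ s ≤ κρ (2 * σ s) + σ s := fun x hx hlow => by
    have : x < κρ (2 * σ s) := not_le.1 fun h => hlow.not_ge ((hκρ_iff x hx _).1.1 h)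
    linarith
  have hβ : 0 ≤ κ₁ (κμ (2 * α₂ (r 0) / (k + 1))) :=
    hκ₁.1.nonneg (hκμ.1.nonneg (by have := h₂.1.nonneg (hr 0); positivity))
  have hγ : 0 ≤ κ₁ (κρ (2 * σ s) + σ s) := by
    have hσs := hσ.nonneg hs
    exact hκ₁.1.nonneg (by linarith [hκρ.1.nonneg (by linarith : 0 ≤ 2 * σ s)])
  rcases le_or_two_mul_add_le_of_dissipation hρ.1 hv hc (fun j => by linarith [hstep j, hρv j]) k
    with hk | hk
  · linarith [(hκ₁_iff _ (hr k) _).2.2 ((hrv k).1.trans hk)]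
  · have hμ : min (v k) (ρ (v k)) ≤ 2 * α₂ (r 0) / (k + 1) := by
      rw [le_div_iff₀ (by positivity)]
      have := mul_le_mul_of_nonneg_left (min_le_right (v k) (ρ (v k))) k.cast_nonneg
      linarith [min_le_left (v k) (ρ (v k)), (hrv 0).2, hv k]
    have hvk : v k ≤ κμ (2 * α₂ (r 0) / (k + 1)) := (hκμ_iff _ (hv k) _).2.2 hμ
    linarith [(hκ₁_iff _ (hr k) _).2.2 ((hrv k).1.trans hvk)]

theorem ISS_Lyapunov_implies_robust_asymptotic_stability_general
    {n nw : ℕ}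
    (H : Vec n → Vec nw → Set (Vec n))
    (W : Set (Vec nw)) (hWc : IsCompact W)
    (Y : Set (Vec n))
    (hRPI : ∀ z ∈ Y, ∀ w ∈ W, H z w ⊆ Y)
    (V : Vec n → ℝ)
    (α₁ α₂ α₃ σ : ℝ → ℝ)
    (h₁ : ClassKInf α₁) (h₂ : ClassKInf α₂) (h₃ : ClassKInf α₃) (hσ : ClassK σ)
    (hbd : ∀ z ∈ Y, α₁ ‖z‖ ≤ V z ∧ V z ≤ α₂ ‖z‖)
    (hdec : ∀ z ∈ Y, ∀ w ∈ W, ∀ zp ∈ H z w, V zp ≤ V z - α₃ ‖z‖ + σ ‖w‖) :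
    ∃ β γ, ClassKL β ∧ ClassK γ ∧
      ∀ z ∈ Y, ∀ wseq : ℕ → Vec nw, (∀ i, wseq i ∈ W) →
        ∀ ψ : ℕ → Vec n, ψ 0 = z → (∀ k, ψ (k + 1) ∈ H (ψ k) (wseq k)) →
          ∀ k, ‖ψ k‖ ≤ β ‖z‖ k + γ (⨆ i, ‖wseq i‖) := by
  obtain ⟨β, γ, hβ, hγ, hbound⟩ := exists_classKL_bound_of_dissipation h₁ h₂ h₃ hσ
  refine ⟨β, γ, hβ, hγ, fun z hz wseq hw ψ hψ0 hψ => ?_⟩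
  have hψY : ∀ j, ψ j ∈ Y := fun j => by
    induction j with
    | zero => exact hψ0 ▸ hz
    | succ j ih => exact hRPI _ ih _ (hw j) (hψ j)
  obtain ⟨C, hC⟩ := hWc.isBounded.exists_norm_le
  have hwS : ∀ j, ‖wseq j‖ ≤ ⨆ i, ‖wseq i‖ :=
    le_ciSup ⟨C, by rintro _ ⟨i, rfl⟩; exact hC _ (hw i)⟩
  subst hψ0
  refine hbound (fun j => ‖ψ j‖) (fun j => V (ψ j)) _ ((norm_nonneg _).trans (hwS 0))
    (fun j => norm_nonneg _) (fun j => hbd _ (hψY j)) fun j => ?_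
  calc V (ψ (j + 1)) ≤ V (ψ j) - α₃ ‖ψ j‖ + σ ‖wseq j‖ := hdec _ (hψY j) _ (hw j) _ (hψ j)
    _ ≤ V (ψ j) - α₃ ‖ψ j‖ + σ (⨆ i, ‖wseq i‖) := by
      gcongr
      exact hσ.2.1.monotoneOn (norm_nonneg _) ((norm_nonneg _).trans (hwS 0)) (hwS j)

/-- Proposition 1: a continuous ISS Lyapunov function on a closed robustly positive
invariant set implies robust asymptotic stability of the origin. -/
theorem ISS_Lyapunov_implies_robust_asymptotic_stability
    {n nw : ℕ}
    (H : Vec n → Vec nw → Set (Vec n))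
    (W : Set (Vec nw)) (hWc : IsCompact W) (hW0 : (0 : Vec nw) ∈ W)
    (Y : Set (Vec n)) (hYclosed : IsClosed Y)
    (hRPI : ∀ z ∈ Y, ∀ w ∈ W, H z w ⊆ Y)
    (V : Vec n → ℝ) (hVc : Continuous V) (hVnn : ∀ z, 0 ≤ V z)
    (α₁ α₂ α₃ σ : ℝ → ℝ)
    (h₁ : ClassKInf α₁) (h₂ : ClassKInf α₂) (h₃ : ClassKInf α₃) (hσ : ClassK σ)
    (hbd : ∀ z ∈ Y, α₁ ‖z‖ ≤ V z ∧ V z ≤ α₂ ‖z‖)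
    (hdec : ∀ z ∈ Y, ∀ w ∈ W, ∀ zp ∈ H z w, V zp ≤ V z - α₃ ‖z‖ + σ ‖w‖) :
    ∃ β γ, ClassKL β ∧ ClassK γ ∧
      ∀ z ∈ Y, ∀ wseq : ℕ → Vec nw, (∀ i, wseq i ∈ W) →
        ∀ ψ : ℕ → Vec n, ψ 0 = z → (∀ k, ψ (k + 1) ∈ H (ψ k) (wseq k)) →
          ∀ k, ‖ψ k‖ ≤ β ‖z‖ k + γ (⨆ i, ‖wseq i‖) :=
  ISS_Lyapunov_implies_robust_asymptotic_stability_general H W hWc Y hRPI V α₁ α₂ α₃ σ h₁ h₂ h₃ hσ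
    hbd hdec
end
end

section
/- (Proposition 2.) Fix ρ ∈ [0,1). Under Assumptions 1 and 2, with Ω_0,…,Ω_{N−1} and Z_f compact, ξ_c continuous, and (0,𝟎) ∈ F̄_ρ, there exist class-K∞ functions α₁ and α₂ such that α₁(‖z‖) ≤ V(z) ≤ α₂(‖z‖) for every z = (x,𝐮) ∈ F̄_ρ. -/
open scoped Classical Pointwise
open Filter

noncomputable section

section Framework

variable {nx nu nw N : ℕ}

/-- Nominal `k`-step trajectory `φ(x,𝐮;k)` of `x⁺ = f(x,u,0)` (horizon `N+1`). -/
def phi (f : Vec nx → Vec nu → Vec nw → Vec nx) (x : Vec nx)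
    (u : Fin (N + 1) → Vec nu) : ℕ → Vec nx
  | 0 => x
  | k + 1 => f (phi f x u k) (if h : k < N + 1 then u ⟨k, h⟩ else 0) 0

/-- The cost `V(x,𝐮) = Σ l(φ(x,𝐮;k),u_k) + m(φ(x,𝐮;N))`. -/
def Vcost (f : Vec nx → Vec nu → Vec nw → Vec nx) (l : Vec nx → Vec nu → ℝ)
    (m : Vec nx → ℝ) (x : Vec nx) (u : Fin (N + 1) → Vec nu) : ℝ :=
  (∑ k : Fin (N + 1), l (phi f x u (k : ℕ)) (u k)) + m (phi f x u (N + 1))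

/-- Feasibility of a state–input-sequence pair. -/
def Feasible (f : Vec nx → Vec nu → Vec nw → Vec nx)
    (Ω : Fin (N + 1) → Set (Vec nx × Vec nu)) (Zf : Set (Vec nx))
    (x : Vec nx) (u : Fin (N + 1) → Vec nu) : Prop :=
  (∀ k : Fin (N + 1), (phi f x u (k : ℕ), u k) ∈ Ω k) ∧ phi f x u (N + 1) ∈ Zf

/-- The set `𝒰_ρ(x,ũ)` of feasible input sequences of the stability filter. -/
def Useq (f : Vec nx → Vec nu → Vec nw → Vec nx) (l : Vec nx → Vec nu → ℝ)
    (m : Vec nx → ℝ) (Ω : Fin (N + 1) → Set (Vec nx × Vec nu)) (Zf : Set (Vec nx))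
    (ξc : Vec nx → (Fin (N + 1) → Vec nu) → Vec nw → Fin (N + 1) → Vec nu)
    (ρ : ℝ) (x : Vec nx) (ut : Fin (N + 1) → Vec nu) : Set (Fin (N + 1) → Vec nu) :=
  {v | Feasible f Ω Zf x v ∧
    Vcost f l m (f x (v 0) 0) (ξc (f x (v 0) 0) v 0) ≤
      Vcost f l m x ut - (1 - ρ) * l x (ut 0)}

/-- The admissible set `F̄_ρ` of state–warmstart pairs. -/
def Fbar (f : Vec nx → Vec nu → Vec nw → Vec nx) (l : Vec nx → Vec nu → ℝ)
    (m : Vec nx → ℝ) (Ω : Fin (N + 1) → Set (Vec nx × Vec nu)) (Zf : Set (Vec nx))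
    (ξc : Vec nx → (Fin (N + 1) → Vec nu) → Vec nw → Fin (N + 1) → Vec nu)
    (ρ : ℝ) : Set (Vec nx × (Fin (N + 1) → Vec nu)) :=
  {p | Feasible f Ω Zf p.1 p.2 ∧ (Useq f l m Ω Zf ξc ρ p.1 p.2).Nonempty}

/-- The warmstart generating function `ξ`, switching between `ξ_f` and `ξ_c`. -/
def warmstart (f : Vec nx → Vec nu → Vec nw → Vec nx) (l : Vec nx → Vec nu → ℝ)
    (m : Vec nx → ℝ) (Zf : Set (Vec nx))
    (ξc : Vec nx → (Fin (N + 1) → Vec nu) → Vec nw → Fin (N + 1) → Vec nu)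
    (ξf : Vec nx → (Fin (N + 1) → Vec nu) → Fin (N + 1) → Vec nu)
    (x : Vec nx) (u : Fin (N + 1) → Vec nu) (w : Vec nw) : Fin (N + 1) → Vec nu :=
  if x ∈ Zf ∧ Vcost f l m x (ξf x u) ≤ Vcost f l m x (ξc x u w) then ξf x u
  else ξc x u w

/-- The closed-loop difference inclusion map `H_ρ(z,w)`. -/
def Hmap (f : Vec nx → Vec nu → Vec nw → Vec nx) (l : Vec nx → Vec nu → ℝ)
    (m : Vec nx → ℝ) (Ω : Fin (N + 1) → Set (Vec nx × Vec nu)) (Zf : Set (Vec nx))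
    (ξc : Vec nx → (Fin (N + 1) → Vec nu) → Vec nw → Fin (N + 1) → Vec nu)
    (ξf : Vec nx → (Fin (N + 1) → Vec nu) → Fin (N + 1) → Vec nu)
    (ρ : ℝ) (z : Vec nx × (Fin (N + 1) → Vec nu)) (w : Vec nw) :
    Set (Vec nx × (Fin (N + 1) → Vec nu)) :=
  {zp | ∃ v ∈ Useq f l m Ω Zf ξc ρ z.1 z.2,
    zp = (f z.1 (v 0) w, warmstart f l m Zf ξc ξf (f z.1 (v 0) w) v w)}

end Framework

section Aux

variable {nx nu nw N : ℕ}

lemma ClassKInf.nonneg' {σ : ℝ → ℝ} (h : ClassKInf σ) {s : ℝ} (hs : 0 ≤ s) : 0 ≤ σ s := by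
  rcases eq_or_lt_of_le hs with h0 | h0
  · rw [← h0, h.1.2.2]
  · rw [← h.1.2.2]
    exact (h.1.2.1 Set.self_mem_Ici (le_of_lt h0) h0).le

lemma ClassKInf.mono' {σ : ℝ → ℝ} (h : ClassKInf σ) {s t : ℝ} (hs : 0 ≤ s) (hst : s ≤ t) :
    σ s ≤ σ t :=
  h.1.2.1.monotoneOn (Set.mem_Ici.2 hs) (Set.mem_Ici.2 (hs.trans hst)) hst

lemma phi_cont (f : Vec nx → Vec nu → Vec nw → Vec nx)
    (hfc : Continuous fun p : Vec nx × Vec nu × Vec nw => f p.1 p.2.1 p.2.2) (j : ℕ) :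
    Continuous fun p : Vec nx × (Fin (N + 1) → Vec nu) => phi f p.1 p.2 j := by
  induction j with
  | zero => exact continuous_fst
  | succ k ih =>
      have h2 : Continuous fun p : Vec nx × (Fin (N + 1) → Vec nu) =>
          (if h : k < N + 1 then p.2 ⟨k, h⟩ else 0) := by
        by_cases h : k < N + 1
        · simp only [dif_pos h]
          exact (continuous_apply _).comp continuous_snd
        · simp only [dif_neg h]
          exact continuous_const
      exact hfc.comp (ih.prodMk (h2.prodMk continuous_const))

lemma Vcost_cont (f : Vec nx → Vec nu → Vec nw → Vec nx)
    (l : Vec nx → Vec nu → ℝ) (m : Vec nx → ℝ)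
    (hfc : Continuous fun p : Vec nx × Vec nu × Vec nw => f p.1 p.2.1 p.2.2)
    (hlc : Continuous fun p : Vec nx × Vec nu => l p.1 p.2)
    (hmc : Continuous m) :
    Continuous fun p : Vec nx × (Fin (N + 1) → Vec nu) => Vcost f l m p.1 p.2 := by
  unfold Vcost
  apply Continuous.add
  · apply continuous_finset_sum
    intro k _
    exact hlc.comp ((phi_cont f hfc (k : ℕ)).prodMk ((continuous_apply k).comp continuous_snd))
  · exact hmc.comp (phi_cont f hfc (N + 1))

lemma phi_zero (f : Vec nx → Vec nu → Vec nw → Vec nx) (hf0 : f 0 0 0 = 0) (j : ℕ) :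
    phi (N := N) f 0 (fun _ => 0) j = 0 := by
  induction j with
  | zero => rfl
  | succ k ih =>
      show f (phi f 0 (fun _ => 0) k)
        (if h : k < N + 1 then (fun _ : Fin (N + 1) => (0 : Vec nu)) ⟨k, h⟩ else 0) 0 = 0
      rw [ih]
      split_ifs <;> exact hf0

lemma Vcost_zero (f : Vec nx → Vec nu → Vec nw → Vec nx)
    (l : Vec nx → Vec nu → ℝ) (m : Vec nx → ℝ)
    (hf0 : f 0 0 0 = 0) (hl0 : l 0 0 = 0) (hm0 : m 0 = 0) :
    Vcost (N := N) f l m 0 (fun _ => 0) = 0 := by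
  unfold Vcost
  simp [phi_zero (N := N) f hf0, hl0, hm0]

end Aux

/-- Proposition 2: lower and upper class-K∞ bounds on `V` over `F̄_ρ`. -/
theorem Vcost_classKInf_bounds
    {nx nu nw N : ℕ}
    (f : Vec nx → Vec nu → Vec nw → Vec nx)
    (l : Vec nx → Vec nu → ℝ) (m : Vec nx → ℝ)
    (Ω : Fin (N + 1) → Set (Vec nx × Vec nu)) (Zf : Set (Vec nx))
    (ξc : Vec nx → (Fin (N + 1) → Vec nu) → Vec nw → Fin (N + 1) → Vec nu)
    (ρ : ℝ) (hρ : ρ ∈ Set.Ico (0 : ℝ) 1)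
    -- setting
    (hΩ : ∀ k, IsCompact (Ω k)) (hZfc : IsCompact Zf)
    (hZf0 : (0 : Vec nx) ∈ interior Zf)
    (hf0 : f 0 0 0 = 0)
    -- Assumption 1
    (hfc : Continuous fun p : Vec nx × Vec nu × Vec nw => f p.1 p.2.1 p.2.2)
    (hlc : Continuous fun p : Vec nx × Vec nu => l p.1 p.2)
    (hmc : Continuous m)
    (hl0 : l 0 0 = 0) (hm0 : m 0 = 0) (hmnn : ∀ x, 0 ≤ m x)
    -- Assumption 2
    (αl : ℝ → ℝ) (hαl : ClassKInf αl)
    (hlb : ∀ k, ∀ p ∈ Ω k, αl ‖p‖ ≤ l p.1 p.2)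
    -- continuity of ξ_c
    (hξc : Continuous fun p : Vec nx × (Fin (N + 1) → Vec nu) × Vec nw =>
      ξc p.1 p.2.1 p.2.2)
    (h00 : ((0 : Vec nx), fun _ : Fin (N + 1) => (0 : Vec nu)) ∈ Fbar f l m Ω Zf ξc ρ) :
    ∃ α₁ α₂ : ℝ → ℝ, ClassKInf α₁ ∧ ClassKInf α₂ ∧
      ∀ p ∈ Fbar f l m Ω Zf ξc ρ,
        α₁ ‖p‖ ≤ Vcost f l m p.1 p.2 ∧ Vcost f l m p.1 p.2 ≤ α₂ ‖p‖ := by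
  classical
  -- abbreviations
  have hαlnn : ∀ {s : ℝ}, 0 ≤ s → 0 ≤ αl s := fun hs => hαl.nonneg' hs
  set W : Vec nx × (Fin (N + 1) → Vec nu) → ℝ := fun p => Vcost f l m p.1 p.2 with hWdef
  set S := Fbar f l m Ω Zf ξc ρ with hSdef
  have hWc : Continuous W := Vcost_cont f l m hfc hlc hmc
  have hW0 : W 0 = 0 := Vcost_zero f l m hf0 hl0 hm0
  -- lower bound
  have hlow : ∀ p ∈ S, αl ‖p‖ ≤ W p := by
    rintro ⟨x, u⟩ ⟨⟨hmem, -⟩, -⟩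
    obtain ⟨k1, -, hk1⟩ :=
      Finset.exists_mem_eq_sup Finset.univ Finset.univ_nonempty (fun i : Fin (N + 1) => ‖u i‖₊)
    have hu_norm : ‖u‖ = ‖u k1‖ := by
      rw [← coe_nnnorm, ← coe_nnnorm, Pi.nnnorm_def, hk1]
    obtain ⟨k0, hk0⟩ : ∃ k0 : Fin (N + 1),
        ‖((x, u) : Vec nx × (Fin (N + 1) → Vec nu))‖ ≤ ‖(phi f x u (k0 : ℕ), u k0)‖ := by
      rcases le_total ‖u‖ ‖x‖ with hc | hc
      · refine ⟨0, ?_⟩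
        have h1 : ‖((x, u) : Vec nx × (Fin (N + 1) → Vec nu))‖ = ‖x‖ :=
          (Prod.norm_def _).trans (max_eq_left hc)
        rw [h1]
        exact norm_fst_le (x, u 0)
      · refine ⟨k1, ?_⟩
        have h1 : ‖((x, u) : Vec nx × (Fin (N + 1) → Vec nu))‖ = ‖u k1‖ :=
          ((Prod.norm_def _).trans (max_eq_right hc)).trans hu_norm
        rw [h1]
        exact norm_snd_le (phi f x u (k1 : ℕ), u k1)
    have hterm : ∀ k : Fin (N + 1), 0 ≤ l (phi f x u (k : ℕ)) (u k) := fun k =>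
      le_trans (hαlnn (norm_nonneg _)) (hlb k _ (hmem k))
    have hsum : l (phi f x u (k0 : ℕ)) (u k0) ≤
        ∑ k : Fin (N + 1), l (phi f x u (k : ℕ)) (u k) :=
      Finset.single_le_sum (fun k _ => hterm k) (Finset.mem_univ k0)
    have hfirst : αl ‖((x, u) : Vec nx × (Fin (N + 1) → Vec nu))‖ ≤
        l (phi f x u (k0 : ℕ)) (u k0) :=
      le_trans (hαl.mono' (norm_nonneg _) hk0) (hlb k0 _ (hmem k0))
    show αl _ ≤ Vcost f l m x u
    unfold Vcost
    have hm' : 0 ≤ m (phi f x u (N + 1)) := hmnn _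
    linarith
  have hWnn : ∀ p ∈ S, 0 ≤ W p := fun p hp =>
    le_trans (hαlnn (norm_nonneg p)) (hlow p hp)
  -- boundedness of S
  obtain ⟨C, hC⟩ := isBounded_iff_forall_norm_le.1 (isCompact_iUnion hΩ).isBounded
  have hSrad : ∀ p ∈ S, ‖p‖ ≤ C := by
    rintro ⟨x, u⟩ ⟨⟨hmem, -⟩, -⟩
    have hx : ‖x‖ ≤ C :=
      le_trans (norm_fst_le (phi f x u ((0 : Fin (N + 1)) : ℕ), u 0))
        (hC _ (Set.mem_iUnion.2 ⟨0, hmem 0⟩))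
    have hu : ‖u‖ ≤ C := by
      refine (pi_norm_le_iff_of_nonneg ((norm_nonneg x).trans hx)).2 fun k => ?_
      exact le_trans (norm_snd_le (phi f x u (k : ℕ), u k)) (hC _ (Set.mem_iUnion.2 ⟨k, hmem k⟩))
    exact max_le hx hu
  -- bound on W over S
  obtain ⟨M, hM⟩ := (isCompact_closedBall (0 : Vec nx × (Fin (N + 1) → Vec nu)) C)
    |>.exists_bound_of_continuousOn hWc.continuousOn
  have hMb : ∀ p ∈ S, W p ≤ M := fun p hp =>
    le_trans (le_abs_self _)
      (hM p (by simpa [Metric.mem_closedBall, dist_zero_right] using hSrad p hp))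
  have hM0 : 0 ≤ M := le_trans (hWnn _ h00) (hMb _ h00)
  -- the sup construction
  set t : (Vec nx × (Fin (N + 1) → Vec nu)) → ℝ → ℝ :=
    fun p s => W p * min 1 (s / ‖p‖) with htdef
  set T : ℝ → Set ℝ := fun s => insert 0 ((fun p => t p s) '' S) with hTdef
  set g : ℝ → ℝ := fun s => sSup (T s) with hgdef
  have hTne : ∀ s, (T s).Nonempty := fun s => ⟨0, Set.mem_insert _ _⟩
  have hmemT : ∀ s, ∀ p ∈ S, t p s ∈ T s := fun s p hp =>
    Set.mem_insert_of_mem _ (Set.mem_image_of_mem _ hp)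
  have htnonneg : ∀ s, 0 ≤ s → ∀ p ∈ S, 0 ≤ t p s := fun s hs p hp =>
    mul_nonneg (hWnn p hp) (le_min zero_le_one (div_nonneg hs (norm_nonneg _)))
  have htleW : ∀ s, ∀ p ∈ S, t p s ≤ W p := fun s p hp =>
    mul_le_of_le_one_right (hWnn p hp) (min_le_left _ _)
  have hTbdd : ∀ s, 0 ≤ s → BddAbove (T s) := by
    intro s hs
    refine ⟨M, ?_⟩
    rintro x hx
    simp only [hTdef, Set.mem_insert_iff, Set.mem_image] at hx
    rcases hx with rfl | ⟨p, hp, rfl⟩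
    · exact hM0
    · exact (htleW s p hp).trans (hMb p hp)
  have hgnn : ∀ s, 0 ≤ s → 0 ≤ g s := fun s hs =>
    le_csSup (hTbdd s hs) (Set.mem_insert _ _)
  have hg0 : g 0 = 0 := by
    refine le_antisymm ?_ (hgnn 0 le_rfl)
    refine csSup_le (hTne 0) ?_
    rintro x hx
    simp only [hTdef, Set.mem_insert_iff, Set.mem_image] at hx
    rcases hx with rfl | ⟨p, hp, rfl⟩
    · exact le_rfl
    · simp [htdef]
  have hgmono : ∀ s s', 0 ≤ s → s ≤ s' → g s ≤ g s' := by
    intro s s' hs hss'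
    refine csSup_le (hTne s) ?_
    intro x hx
    simp only [hTdef, Set.mem_insert_iff, Set.mem_image] at hx
    rcases hx with rfl | ⟨p, hp, rfl⟩
    · exact hgnn s' (hs.trans hss')
    · have hdiv : s / ‖p‖ ≤ s' / ‖p‖ := by
        rcases eq_or_lt_of_le (norm_nonneg p) with h0 | h0
        · rw [← h0]; simp
        · exact (div_le_div_iff_of_pos_right h0).2 hss'
      have h1 : t p s ≤ t p s' :=
        mul_le_mul_of_nonneg_left (min_le_min le_rfl hdiv) (hWnn p hp)
      exact h1.trans (le_csSup (hTbdd s' (hs.trans hss')) (hmemT s' p hp))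
  have hscale : ∀ s0 s, 0 < s0 → s0 ≤ s → g s ≤ (s / s0) * g s0 := by
    intro s0 s hs0 hss
    have hc1 : (1 : ℝ) ≤ s / s0 := (one_le_div hs0).2 hss
    have hc0 : (0 : ℝ) ≤ s / s0 := zero_le_one.trans hc1
    refine csSup_le (hTne s) ?_
    intro x hx
    simp only [hTdef, Set.mem_insert_iff, Set.mem_image] at hx
    rcases hx with rfl | ⟨p, hp, rfl⟩
    · exact mul_nonneg hc0 (hgnn s0 hs0.le)
    · have heq : s / ‖p‖ = (s / s0) * (s0 / ‖p‖) := by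
        rw [div_mul_div_comm, mul_comm s s0, mul_div_mul_left _ _ (ne_of_gt hs0)]
      have hkey : min 1 (s / ‖p‖) ≤ (s / s0) * min 1 (s0 / ‖p‖) := by
        rcases le_total 1 (s0 / ‖p‖) with hb | hb
        · rw [min_eq_left hb]
          calc min 1 (s / ‖p‖) ≤ 1 := min_le_left _ _
            _ ≤ (s / s0) * 1 := by rw [mul_one]; exact hc1
        · rw [min_eq_right hb, heq]
          exact min_le_right _ _
      calc t p s = W p * min 1 (s / ‖p‖) := rfl
        _ ≤ W p * ((s / s0) * min 1 (s0 / ‖p‖)) :=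
            mul_le_mul_of_nonneg_left hkey (hWnn p hp)
        _ = (s / s0) * t p s0 := by simp only [htdef]; ring
        _ ≤ (s / s0) * g s0 :=
            mul_le_mul_of_nonneg_left (le_csSup (hTbdd s0 hs0.le) (hmemT s0 p hp)) hc0
  have hmemle : ∀ p ∈ S, W p ≤ g ‖p‖ := by
    intro p hp
    rcases eq_or_lt_of_le (norm_nonneg p) with h0 | h0
    · have hp0 : p = 0 := norm_eq_zero.1 h0.symm
      rw [hp0, hW0]
      exact hgnn _ (norm_nonneg _)
    · have h1 : t p ‖p‖ = W p := by
        simp only [htdef]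
        rw [div_self (ne_of_gt h0), min_self, mul_one]
      exact h1 ▸ le_csSup (hTbdd _ (norm_nonneg p)) (hmemT _ p hp)
  -- continuity at 0
  have hcont0 : ∀ ε > (0 : ℝ), ∃ δ > (0 : ℝ), ∀ s, 0 ≤ s → s < δ → g s ≤ ε := by
    intro ε hε
    obtain ⟨δ₁, hδ₁pos, hδ₁⟩ := Metric.continuousAt_iff.1
      (hWc.continuousAt (x := (0 : Vec nx × (Fin (N + 1) → Vec nu)))) ε hε
    set M1 : ℝ := M + 1 with hM1def
    have hM1 : (0 : ℝ) < M1 := by simp only [hM1def]; linarith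
    refine ⟨min δ₁ (ε * δ₁ / M1), lt_min hδ₁pos (by positivity), ?_⟩
    intro s hs hsδ
    refine csSup_le (hTne s) ?_
    intro x hx
    simp only [hTdef, Set.mem_insert_iff, Set.mem_image] at hx
    rcases hx with rfl | ⟨p, hp, rfl⟩
    · exact hε.le
    · rcases lt_or_ge ‖p‖ δ₁ with hn | hn
      · have hdist : dist p (0 : Vec nx × (Fin (N + 1) → Vec nu)) < δ₁ := by
          rwa [dist_zero_right]
        have hWp : W p < ε := by
          have h2 := hδ₁ hdist
          rw [Real.dist_eq, hW0, sub_zero] at h2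
          exact lt_of_le_of_lt (le_abs_self _) h2
        exact (htleW s p hp).trans hWp.le
      · have hδ₁ne : δ₁ ≠ 0 := ne_of_gt hδ₁pos
        have hM1ne : M1 ≠ 0 := ne_of_gt hM1
        have h1 : min 1 (s / ‖p‖) ≤ s / δ₁ := by
          refine (min_le_right _ _).trans ?_
          rcases eq_or_lt_of_le ((hδ₁pos.le).trans hn) with h0 | h0
          · rw [← h0] at hn ⊢
            exact div_le_div_of_nonneg_left hs hδ₁pos hn
          · exact div_le_div_of_nonneg_left hs hδ₁pos hn
        have h2 : t p s ≤ M1 * (s / δ₁) := by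
          refine mul_le_mul ((hMb p hp).trans (by simp only [hM1def]; linarith)) h1
            (le_min zero_le_one (div_nonneg hs (norm_nonneg _))) hM1.le
        have hsle : s ≤ ε * δ₁ / M1 := le_of_lt (lt_of_lt_of_le hsδ (min_le_right _ _))
        have h3 : M1 * (s / δ₁) ≤ ε := by
          calc M1 * (s / δ₁) ≤ M1 * ((ε * δ₁ / M1) / δ₁) := by gcongr
            _ = ε := by field_simp
        exact h2.trans h3
  -- continuity of g on [0, ∞)
  have hgcont : ContinuousOn g (Set.Ici 0) := by
    rw [Metric.continuousOn_iff]
    intro b hb ε hε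
    rcases eq_or_lt_of_le (Set.mem_Ici.1 hb) with hb0 | hb0
    · obtain ⟨δ, hδpos, hδ⟩ := hcont0 (ε / 2) (by linarith)
      refine ⟨δ, hδpos, ?_⟩
      intro a ha hd
      have ha' : (0 : ℝ) ≤ a := Set.mem_Ici.1 ha
      have hga : g a ≤ ε / 2 := by
        refine hδ a ha' ?_
        rwa [Real.dist_eq, ← hb0, sub_zero, abs_of_nonneg ha'] at hd
      rw [Real.dist_eq, ← hb0, hg0, sub_zero, abs_of_nonneg (hgnn a ha')]
      linarith
    · have hgb := hgnn b hb0.le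
      have hbne : b ≠ 0 := ne_of_gt hb0
      refine ⟨min (b / 2) (ε * b / (g b + 1)), lt_min (by linarith) (by positivity), ?_⟩
      intro a ha hd
      have hd1 : |a - b| < b / 2 := lt_of_lt_of_le (by rwa [Real.dist_eq] at hd) (min_le_left _ _)
      have hd2 : |a - b| < ε * b / (g b + 1) :=
        lt_of_lt_of_le (by rwa [Real.dist_eq] at hd) (min_le_right _ _)
      have hapos : 0 < a := by
        have h4 := (abs_lt.1 hd1).1
        linarith
      have hkey : |g a - g b| ≤ (|a - b| / b) * g b := by
        rcases le_total b a with hab | hab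
        · have h1 : g a ≤ (a / b) * g b := hscale b a hb0 hab
          have h2 : g b ≤ g a := hgmono b a hb0.le hab
          rw [abs_of_nonneg (by linarith), abs_of_nonneg (by linarith)]
          have heq : (a / b) * g b - g b = ((a - b) / b) * g b := by
            field_simp
          linarith
        · have h1 : g b ≤ (b / a) * g a := hscale a b hapos hab
          have h2 : g a ≤ g b := hgmono a b hapos.le hab
          have h3 : (a / b) * g b ≤ g a := by
            have h5 : (a / b) * g b ≤ (a / b) * ((b / a) * g a) :=
              mul_le_mul_of_nonneg_left h1 (le_of_lt (div_pos hapos hb0))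
            have heq2 : (a / b) * ((b / a) * g a) = g a := by
              field_simp
            linarith
          rw [abs_of_nonpos (by linarith), abs_of_nonpos (by linarith)]
          have heq : g b - (a / b) * g b = (-(a - b) / b) * g b := by
            field_simp
            ring
          linarith
      rw [Real.dist_eq]
      have h6 : (0 : ℝ) < g b + 1 := by linarith
      calc |g a - g b| ≤ (|a - b| / b) * g b := hkey
        _ ≤ (|a - b| / b) * (g b + 1) := by
            refine mul_le_mul_of_nonneg_left (by linarith) ?_
            exact div_nonneg (abs_nonneg _) hb0.le
        _ < ((ε * b / (g b + 1)) / b) * (g b + 1) := by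
            refine mul_lt_mul_of_pos_right ?_ h6
            exact (div_lt_div_iff_of_pos_right hb0).2 hd2
        _ = ε := by field_simp
  -- assemble
  refine ⟨αl, fun s => s + g s, hαl, ⟨⟨?_, ?_, ?_⟩, ?_⟩, ?_⟩
  · exact continuousOn_id.add hgcont
  · intro a ha b hb hab
    exact add_lt_add_of_lt_of_le hab (hgmono a b (Set.mem_Ici.1 ha) hab.le)
  · show (0 : ℝ) + g 0 = 0
    rw [hg0, add_zero]
  · refine tendsto_atTop_mono' atTop ?_ tendsto_id
    filter_upwards [eventually_ge_atTop (0 : ℝ)] with s hs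
    exact le_add_of_nonneg_right (hgnn s hs)
  · intro p hp
    refine ⟨hlow p hp, ?_⟩
    exact (hmemle p hp).trans (le_add_of_nonneg_left (norm_nonneg p))
end
end
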